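/- Recurrence for the mapping kernel: for every natural number n and every λ-term F, Q_{n+1}^F =βη (B_n (B (C B F) C) Q_n^F), where Q_n^F = λx_1…x_n z.(z (F x_1) ⋯ (F x_n)); moreover Q_0^F = I. -/
import Mathlib


namespace LC

/-- Untyped λ-terms, de Bruijn indices. -/
inductive Tm : Type
  | var : ℕ → Tm
  | app : Tm → Tm → Tm
  | lam : Tm → Tm
  deriving DecidableEq

namespace Tm

/-- Shift the free variables ≥ c up by one. -/
def lift (c : ℕ) : Tm → Tm
  | var n => if n < c then var n else var (n + 1)
  | app a b => app (lift c a) (lift c b)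
  | lam a => lam (lift (c + 1) a)

/-- Substitute `s` for the free variable `k`. -/
def subst (k : ℕ) (s : Tm) : Tm → Tm
  | var n => if n = k then s else if k < n then var (n - 1) else var n
  | app a b => app (subst k s a) (subst k s b)
  | lam a => lam (subst (k + 1) (lift 0 s) a)

/-- One-step βη-reduction (with congruence closure). -/
inductive Step : Tm → Tm → Prop
  | beta (a b : Tm) : Step (app (lam a) b) (subst 0 b a)
  | eta (a : Tm) : Step (lam (app (lift 0 a) (var 0))) a
  | appL {a a' : Tm} (b : Tm) : Step a a' → Step (app a b) (app a' b)
  | appR (a : Tm) {b b' : Tm} : Step b b' → Step (app a b) (app a b')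
  | lamCongr {a a' : Tm} : Step a a' → Step (lam a) (lam a')

/-- βη-equivalence: the equivalence relation generated by βη-reduction. -/
def BetaEta : Tm → Tm → Prop := Relation.EqvGen Step

/-- Multi-step βη-reduction: reflexive-transitive closure of βη-reduction. -/
def Reduces : Tm → Tm → Prop := Relation.ReflTransGen Step

/-- I = λx.x -/
def I : Tm := lam (var 0)
/-- K = λxy.x -/
def K : Tm := lam (lam (var 1))
/-- B = λxyz.(x (y z)) -/
def B : Tm := lam (lam (lam (app (var 2) (app (var 1) (var 0)))))
/-- C = λxyz.(x z y) -/
def C : Tm := lam (lam (lam (app (app (var 2) (var 0)) (var 1))))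
/-- S = λxyz.(x z (y z)) -/
def S : Tm := lam (lam (lam (app (app (var 2) (var 0)) (app (var 1) (var 0)))))

/-- body of the n-th Church numeral: s (s ⋯ (s z)⋯), n times. -/
def churchBody : ℕ → Tm
  | 0 => var 0
  | n + 1 => app (var 1) (churchBody n)

/-- The n-th Church numeral c_n = λsz.(s (s ⋯ (s z)⋯)). -/
def church (n : ℕ) : Tm := lam (lam (churchBody n))

/-- n nested λ-abstractions. -/
def lamN : ℕ → Tm → Tm
  | 0, t => t
  | n + 1, t => lam (lamN n t)

/-- Shift all free variables up by n. -/
def liftN (n : ℕ) (t : Tm) : Tm := (lift 0)^[n] t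

/-- t (var (a+k-1)) ⋯ (var (a+1)) (var a) : left-associated application of t
to k variables with descending indices. -/
def appVars (t : Tm) (a k : ℕ) : Tm :=
  ((List.range k).reverse).foldl (fun s i => app s (var (a + i))) t

/-- t (var a) (var (a+1)) ⋯ (var (a+k-1)) : left-associated application of t
to k variables with ascending indices. -/
def appVarsAsc (t : Tm) (a k : ℕ) : Tm :=
  (List.range k).foldl (fun s i => app s (var (a + i))) t

/-- Left-associated application of t to a list of terms. -/
def appList (t : Tm) (l : List Tm) : Tm := l.foldl app t

/-- K_n = λp x_1…x_n. p -/
def Kn (n : ℕ) : Tm := lamN (n + 1) (var n)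
/-- S_n = λpq x_1…x_n.(p x_1⋯x_n (q x_1⋯x_n)) -/
def Sn (n : ℕ) : Tm :=
  lamN (n + 2) (app (appVars (var (n + 1)) 0 n) (appVars (var n) 0 n))
/-- B_n = λpq x_1…x_n.(p (q x_1⋯x_n)) -/
def Bn (n : ℕ) : Tm := lamN (n + 2) (app (var (n + 1)) (appVars (var n) 0 n))
/-- C_n = λpq x_1…x_n.(p x_1⋯x_n q) -/
def Cn (n : ℕ) : Tm := lamN (n + 2) (app (appVars (var (n + 1)) 0 n) (var n))


/-- Body of the mapping kernel: z (F' x_1) ⋯ (F' x_n) where z = var 0 and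
x_i = var (n + 1 - i) under the binders x_1,…,x_n,z. -/
def qBody (F' : Tm) (n : ℕ) : Tm :=
  ((List.range n).reverse).foldl (fun s i => app s (app F' (var (i + 1)))) (var 0)

/-- The n-ary mapping kernel Q_n^F = λx_1…x_n z.(z (F x_1) ⋯ (F x_n)), where
x_1,…,x_n,z do not occur free in F (so F is shifted under the binders). -/
def Q (F : Tm) (n : ℕ) : Tm := lamN (n + 1) (qBody (liftN (n + 1) F) n)

section Aux

lemma lift_lift : ∀ (t : Tm) (c c' : ℕ), c' ≤ c →
    lift (c + 1) (lift c' t) = lift c' (lift c t)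
  | var n, c, c', h => by
    simp only [lift]
    by_cases h1 : n < c' <;> by_cases h2 : n < c <;>
      simp only [lift, h1, h2, if_true, if_false, if_pos, if_neg] <;>
      split_ifs <;> first | rfl | omega
  | app a b, c, c', h => by
    simp only [lift, lift_lift a c c' h, lift_lift b c c' h]
  | lam a, c, c', h => by
    simp only [lift, lift_lift a (c + 1) (c' + 1) (Nat.succ_le_succ h)]

lemma subst_lift : ∀ (t : Tm) (k : ℕ) (s : Tm), subst k s (lift k t) = t
  | var n, k, s => by
    simp only [lift]
    by_cases h1 : n < k <;>
      simp only [h1, if_true, if_false, subst] <;> split_ifs <;>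
      first | rfl | omega | (congr 1; omega)
  | app a b, k, s => by
    simp only [lift, subst, subst_lift a k s, subst_lift b k s]
  | lam a, k, s => by
    simp only [lift, subst, subst_lift a (k + 1) (lift 0 s)]

lemma liftN_zero (t : Tm) : liftN 0 t = t := rfl

lemma liftN_succ (m : ℕ) (t : Tm) : liftN (m + 1) t = liftN m (lift 0 t) :=
  Function.iterate_succ_apply _ _ _

lemma liftN_succ' (m : ℕ) (t : Tm) : liftN (m + 1) t = lift 0 (liftN m t) :=
  Function.iterate_succ_apply' _ _ _

lemma lift_liftN : ∀ (m c : ℕ) (t : Tm), c ≤ m → lift c (liftN m t) = liftN (m + 1) t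
  | m, 0, t, _ => (liftN_succ' m t).symm
  | m + 1, c + 1, t, h => by
    rw [liftN_succ' m t, lift_lift _ c 0 (Nat.zero_le _),
      lift_liftN m c t (Nat.le_of_succ_le_succ h), ← liftN_succ']

lemma subst_liftN (k m : ℕ) (s t : Tm) (h : k ≤ m) :
    subst k s (liftN (m + 1) t) = liftN m t := by
  rw [← lift_liftN m k t h, subst_lift]

lemma liftN_var (k j : ℕ) : liftN k (var j) = var (j + k) := by
  induction k with
  | zero => rfl
  | succ k ih => rw [liftN_succ', ih]; simp [lift]; omega

lemma liftN_app (k : ℕ) (a b : Tm) : liftN k (app a b) = app (liftN k a) (liftN k b) := by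
  induction k with
  | zero => rfl
  | succ k ih => rw [liftN_succ', ih, liftN_succ', liftN_succ']; rfl

lemma lift_B (c : ℕ) : lift c B = B := by
  simp only [B, lift]
  norm_num

lemma lift_C (c : ℕ) : lift c C = C := by
  simp only [C, lift]
  norm_num

lemma liftN_B (k : ℕ) : liftN k B = B := by
  induction k with
  | zero => rfl
  | succ k ih => rw [liftN_succ', ih, lift_B]

lemma liftN_C (k : ℕ) : liftN k C = C := by
  induction k with
  | zero => rfl
  | succ k ih => rw [liftN_succ', ih, lift_C]

lemma subst_B (k : ℕ) (s : Tm) : subst k s B = B := by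
  simp only [B, subst]
  norm_num

lemma subst_C (k : ℕ) (s : Tm) : subst k s C = C := by
  simp only [C, subst]
  norm_num

lemma lamN_lam (m : ℕ) (t : Tm) : lamN m (lam t) = lamN (m + 1) t := by
  induction m with
  | zero => rfl
  | succ m ih => simp only [lamN, ih]

lemma subst_lamN : ∀ (m k : ℕ) (s t : Tm),
    subst k s (lamN m t) = lamN m (subst (k + m) (liftN m s) t)
  | 0, k, s, t => rfl
  | m + 1, k, s, t => by
    simp only [lamN, subst, subst_lamN m (k + 1) (lift 0 s) t, ← liftN_succ]
    congr 3
    omega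

lemma lift_lamN : ∀ (m c : ℕ) (t : Tm), lift c (lamN m t) = lamN m (lift (c + m) t)
  | 0, c, t => rfl
  | m + 1, c, t => by
    simp only [lamN, lift, lift_lamN m (c + 1) t]
    congr 3
    omega

lemma liftN_lamN (k m : ℕ) (t : Tm) : liftN k (lamN m t) = lamN m ((lift m)^[k] t) := by
  induction k with
  | zero => rfl
  | succ k ih =>
    rw [liftN_succ', ih, lift_lamN, Function.iterate_succ_apply']
    congr 2
    omega

end Aux

section Spine

/-- z applied to (G x_e) for e in es. -/
def spineBody (G : Tm) (es : List ℕ) : Tm :=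
  es.foldl (fun s e => app s (app G (var e))) (var 0)

def descList (n : ℕ) : List ℕ := ((List.range n).reverse).map (· + 1)

lemma qBody_eq (G : Tm) (n : ℕ) : qBody G n = spineBody G (descList n) := by
  simp only [qBody, spineBody, descList, List.foldl_map]

lemma mem_descList {n e : ℕ} (h : e ∈ descList n) : 1 ≤ e ∧ e ≤ n := by
  simp only [descList, List.mem_map, List.mem_reverse, List.mem_range] at h
  omega

lemma descList_succ (n : ℕ) : descList (n + 1) = (descList n).map (· + 1) ++ [1] := by
  simp only [descList, List.range_succ_eq_map, List.reverse_cons, List.map_append,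
    List.map_map, List.map_reverse]
  rfl

lemma spineBody_append (G : Tm) (es : List ℕ) (e : ℕ) :
    spineBody G (es ++ [e]) = app (spineBody G es) (app G (var e)) := by
  simp [spineBody, List.foldl_append]

lemma subst_spineFold (k v : ℕ) (G : Tm) :
    ∀ (es : List ℕ) (t : Tm),
      subst k (var v) (es.foldl (fun s e => app s (app G (var e))) t) =
        (es.map fun e => if e = k then v else if k < e then e - 1 else e).foldl
          (fun s e => app s (app (subst k (var v) G) (var e))) (subst k (var v) t)
  | [], t => rfl
  | e :: es, t => by
    simp only [List.foldl_cons, List.map_cons, subst_spineFold k v G es]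
    congr 2
    simp only [subst]
    split_ifs <;> rfl

lemma subst_spineBody (k v : ℕ) (G : Tm) (es : List ℕ) (hk : k ≠ 0 ∨ v = 0) :
    subst k (var v) (spineBody G es) =
      spineBody (subst k (var v) G)
        (es.map fun e => if e = k then v else if k < e then e - 1 else e) := by
  rw [spineBody, subst_spineFold]
  have : subst k (var v) (var 0) = var 0 := by
    simp only [subst]
    split_ifs with h1 h2
    · rcases hk with h | h
      · omega
      · rw [h]
    · omega
    · rfl
  rw [this, spineBody]

lemma lift_spineFold (c : ℕ) (G : Tm) :
    ∀ (es : List ℕ) (t : Tm),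
      lift c (es.foldl (fun s e => app s (app G (var e))) t) =
        (es.map fun e => if e < c then e else e + 1).foldl
          (fun s e => app s (app (lift c G) (var e))) (lift c t)
  | [], t => rfl
  | e :: es, t => by
    simp only [List.foldl_cons, List.map_cons, lift_spineFold c G es]
    congr 2
    simp only [lift]
    split_ifs <;> rfl

lemma lift_spineBody (c : ℕ) (G : Tm) (es : List ℕ) (hc : 1 ≤ c) :
    lift c (spineBody G es) =
      spineBody (lift c G) (es.map fun e => if e < c then e else e + 1) := by
  rw [spineBody, lift_spineFold]
  have : lift c (var 0) = var 0 := by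
    simp only [lift]
    rw [if_pos (by omega)]
  rw [this, spineBody]

lemma appVars_succ (t : Tm) (a m : ℕ) :
    appVars t a (m + 1) = appVars (app t (var (a + m))) a m := by
  simp only [appVars, List.range_succ, List.reverse_append, List.reverse_cons]
  rfl

lemma subst_appVars : ∀ (m : ℕ) (t : Tm) (a k : ℕ) (s : Tm), a + m ≤ k →
    subst k s (appVars t a m) = appVars (subst k s t) a m
  | 0, t, a, k, s, _ => rfl
  | m + 1, t, a, k, s, h => by
    rw [appVars_succ, subst_appVars m _ a k s (by omega), appVars_succ]
    congr 2
    simp only [subst]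
    split_ifs <;> first | rfl | omega

end Spine

section Red

lemma red_appL {a a' : Tm} (b : Tm) (h : Reduces a a') : Reduces (app a b) (app a' b) := by
  induction h with
  | refl => exact .refl
  | tail _ s ih => exact ih.tail (.appL _ s)

lemma red_appR (a : Tm) {b b' : Tm} (h : Reduces b b') : Reduces (app a b) (app a b') := by
  induction h with
  | refl => exact .refl
  | tail _ s ih => exact ih.tail (.appR _ s)

lemma red_app {a a' b b' : Tm} (ha : Reduces a a') (hb : Reduces b b') :
    Reduces (app a b) (app a' b') :=
  (red_appL b ha).trans (red_appR a' hb)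

lemma red_lam {a a' : Tm} (h : Reduces a a') : Reduces (lam a) (lam a') := by
  induction h with
  | refl => exact .refl
  | tail _ s ih => exact ih.tail (.lamCongr s)

lemma red_lamN (m : ℕ) {a a' : Tm} (h : Reduces a a') : Reduces (lamN m a) (lamN m a') := by
  induction m with
  | zero => exact h
  | succ m ih => exact red_lam ih

lemma red_appVars (a m : ℕ) {t t' : Tm} (h : Reduces t t') :
    Reduces (appVars t a m) (appVars t' a m) := by
  induction m generalizing t t' with
  | zero => exact h
  | succ m ih => rw [appVars_succ, appVars_succ]; exact ih (red_app h .refl)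

lemma red_step {a b : Tm} (h : Step a b) : Reduces a b := Relation.ReflTransGen.single h

lemma reduces_betaEta {a b : Tm} (h : Reduces a b) : BetaEta a b := by
  induction h with
  | refl => exact Relation.EqvGen.refl _
  | tail _ s ih => exact Relation.EqvGen.trans _ _ _ ih (Relation.EqvGen.rel _ _ s)

end Red

section SpineRed

lemma spine_red (F : Tm) : ∀ (m c : ℕ) (es : List ℕ), 2 * m + 1 ≤ c →
    (∀ e ∈ es, e ≤ m ∨ (2 * m + 1 ≤ e ∧ e < c)) →
    Reduces (appVars (lamN (m + 1) (spineBody (liftN c F) es)) 0 m)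
      (lam (spineBody (liftN (c - m) F) (es.map fun e => if e ≤ m then e else e - m)))
  | 0, c, es, hc, hes => by
    have h1 : (es.map fun e => if e ≤ 0 then e else e - 0) = es := by
      have : (fun e => if e ≤ 0 then e else e - 0) = id := by
        funext e; split_ifs <;> simp
      rw [this, List.map_id]
    rw [h1]
    have h2 : c - 0 = c := rfl
    rw [h2]
    exact .refl
  | m + 1, c, es, hc, hes => by
    -- peel one argument
    rw [appVars_succ]
    obtain ⟨c', rfl⟩ : ∃ c', c = c' + 1 := ⟨c - 1, by omega⟩
    have hbeta : Step (app (lamN (m + 2) (spineBody (liftN (c' + 1) F) es)) (var (0 + m)))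
        (lamN (m + 1) (spineBody (liftN c' F)
          (es.map fun e => if e = m + 1 then m + (m + 1) else if m + 1 < e then e - 1 else e))) := by
      have h0 : lamN (m + 2) (spineBody (liftN (c' + 1) F) es)
          = lam (lamN (m + 1) (spineBody (liftN (c' + 1) F) es)) := rfl
      rw [h0]
      have := Step.beta (lamN (m + 1) (spineBody (liftN (c' + 1) F) es)) (var (0 + m))
      have hsub : subst 0 (var (0 + m)) (lamN (m + 1) (spineBody (liftN (c' + 1) F) es))
          = lamN (m + 1) (spineBody (liftN c' F)
            (es.map fun e => if e = m + 1 then m + (m + 1) else if m + 1 < e then e - 1 else e)) := by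
        rw [subst_lamN, liftN_var, subst_spineBody _ _ _ _ (Or.inl (by omega)),
          subst_liftN _ _ _ _ (by omega)]
        norm_num
      rw [hsub] at this
      exact this
    refine Relation.ReflTransGen.trans (red_appVars 0 m (red_step hbeta)) ?_
    have ih := spine_red F m c'
      (es.map fun e => if e = m + 1 then m + (m + 1) else if m + 1 < e then e - 1 else e)
      (by omega)
      (by
        intro e he
        simp only [List.mem_map] at he
        obtain ⟨e0, he0, rfl⟩ := he
        rcases hes e0 he0 with h | h <;> split_ifs <;> omega)
    refine ih.trans ?_
    have hmap : ((es.map fun e => if e = m + 1 then m + (m + 1) else if m + 1 < e then e - 1 else e).map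
          fun e => if e ≤ m then e else e - m)
        = es.map fun e => if e ≤ m + 1 then e else e - (m + 1) := by
      rw [List.map_map]
      apply List.map_congr_left
      intro e he
      rcases hes e he with h | h <;> simp only [Function.comp] <;> split_ifs <;> omega
    have hc' : c' - m = c' + 1 - (m + 1) := by omega
    rw [hmap, ← hc']
end SpineRed

section Main

lemma liftN_one (t : Tm) : liftN 1 t = lift 0 t := rfl

lemma liftN_two (t : Tm) : liftN 2 t = lift 0 (lift 0 t) := rfl

lemma iter_lift_spine (F : Tm) (n : ℕ) : ∀ (k c : ℕ), n + 1 ≤ c →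
    (lift (n + 1))^[k] (spineBody (liftN c F) (descList n))
      = spineBody (liftN (c + k) F) (descList n)
  | 0, c, h => rfl
  | k + 1, c, h => by
    rw [Function.iterate_succ_apply', iter_lift_spine F n k c h,
      lift_spineBody _ _ _ (by omega), lift_liftN _ _ _ (by omega)]
    have hl : ((descList n).map fun e => if e < n + 1 then e else e + 1) = descList n := by
      have h2 : ((descList n).map fun e => if e < n + 1 then e else e + 1)
          = (descList n).map id := by
        apply List.map_congr_left
        intro e he
        have := mem_descList he
        simp only [id_eq]
        split_ifs <;> omega
      rw [h2, List.map_id]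
    rw [hl]
    have : c + k + 1 = c + (k + 1) := by omega
    rw [this]

lemma lift_one_spine (F : Tm) (c : ℕ) (es : List ℕ) (h : ∀ e ∈ es, 1 ≤ e) (hc : 1 ≤ c) :
    lift 1 (spineBody (liftN c F) es) = spineBody (liftN (c + 1) F) (es.map (· + 1)) := by
  rw [lift_spineBody _ _ _ le_rfl, lift_liftN _ _ _ hc]
  congr 1
  apply List.map_congr_left
  intro e he
  have := h e he
  split_ifs <;> omega

lemma liftN_Q (F : Tm) (n : ℕ) :
    liftN n (Q F n) = lamN (n + 1) (spineBody (liftN (2 * n + 1) F) (descList n)) := by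
  rw [Q, qBody_eq, liftN_lamN, iter_lift_spine F n n (n + 1) le_rfl]
  have : n + 1 + n = 2 * n + 1 := by omega
  rw [this]

lemma red_A (F : Tm) (n : ℕ) :
    Reduces (appVars (liftN n (Q F n)) 0 n)
      (lam (spineBody (liftN (n + 1) F) (descList n))) := by
  rw [liftN_Q]
  have h := spine_red F n (2 * n + 1) (descList n) le_rfl
    (fun e he => Or.inl (mem_descList he).2)
  have hmap : ((descList n).map fun e => if e ≤ n then e else e - n) = descList n := by
    have h2 : ((descList n).map fun e => if e ≤ n then e else e - n)
        = (descList n).map id := by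
      apply List.map_congr_left
      intro e he
      have := mem_descList he
      simp only [id_eq]
      split_ifs <;> omega
    rw [h2, List.map_id]
  rw [hmap] at h
  have harith : 2 * n + 1 - n = n + 1 := by omega
  rw [harith] at h
  exact h

lemma inner_red (F : Tm) (n : ℕ) :
    Reduces
      (app (app (app B (app (app C B) (liftN n F))) C) (appVars (liftN n (Q F n)) 0 n))
      (lam (lam (spineBody (liftN (n + 2) F) (descList (n + 1))))) := by
  set F2 := liftN n F with hF2
  set F3 := liftN (n + 1) F with hF3
  set F4 := liftN (n + 2) F with hF4
  set G2 := app (app C B) F2 with hG2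
  set A := appVars (liftN n (Q F n)) 0 n with hA
  set A' := lam (spineBody F3 (descList n)) with hA'
  set X := lam (lam (app (app (liftN 2 A') (var 0)) (var 1))) with hX
  have hlF2 : lift 0 F2 = F3 := by rw [hF2, hF3, ← liftN_succ']
  have hlF3 : lift 0 F3 = F4 := by rw [hF3, hF4, ← liftN_succ']
  -- step 1 : B G2 → λλ. (G2↑2) (1 0)
  have s1 : Step (app B G2) (lam (lam (app (liftN 2 G2) (app (var 1) (var 0))))) := by
    have h := Step.beta (lam (lam (app (var 2) (app (var 1) (var 0))))) G2
    have e : subst 0 G2 (lam (lam (app (var 2) (app (var 1) (var 0)))))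
        = lam (lam (app (liftN 2 G2) (app (var 1) (var 0)))) := by
      rw [liftN_two]; rfl
    rw [e] at h
    exact h
  -- step 2 : (λλ. (G2↑2) (1 0)) C → λ. (G2↑1) (C 0)
  have s2 : Step (app (lam (lam (app (liftN 2 G2) (app (var 1) (var 0))))) C)
      (lam (app (liftN 1 G2) (app C (var 0)))) := by
    have h := Step.beta (lam (app (liftN 2 G2) (app (var 1) (var 0)))) C
    have e : subst 0 C (lam (app (liftN 2 G2) (app (var 1) (var 0))))
        = lam (app (liftN 1 G2) (app C (var 0))) := by
      have h1 : subst 1 (lift 0 C) (liftN 2 G2) = liftN 1 G2 :=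
        subst_liftN 1 1 _ _ le_rfl
      show lam (app (subst 1 (lift 0 C) (liftN 2 G2))
        (app (subst 1 (lift 0 C) (var 1)) (subst 1 (lift 0 C) (var 0)))) = _
      rw [h1, lift_C]
      rfl
    rw [e] at h
    exact h
  -- step 3 : (λ. (G2↑1) (C 0)) A → G2 (C A)
  have s3 : Step (app (lam (app (liftN 1 G2) (app C (var 0)))) A)
      (app G2 (app C A)) := by
    have h := Step.beta (app (liftN 1 G2) (app C (var 0))) A
    have e : subst 0 A (app (liftN 1 G2) (app C (var 0)))
        = app G2 (app C A) := by
      have h1 : subst 0 A (liftN 1 G2) = liftN 0 G2 := subst_liftN 0 0 _ _ le_rfl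
      show app (subst 0 A (liftN 1 G2)) (app (subst 0 A C) (subst 0 A (var 0))) = _
      rw [h1, subst_C]
      rfl
    rw [e] at h
    exact h
  -- step 4 : C B → λλ. (B 0) 1
  have s4 : Step (app C B) (lam (lam (app (app B (var 0)) (var 1)))) := by
    have h := Step.beta (lam (lam (app (app (var 2) (var 0)) (var 1)))) B
    have e : subst 0 B (lam (lam (app (app (var 2) (var 0)) (var 1))))
        = lam (lam (app (app B (var 0)) (var 1))) := by
      show lam (lam (app (app (lift 0 (lift 0 B)) (var 0)) (var 1))) = _
      rw [lift_B, lift_B]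
    rw [e] at h
    exact h
  -- step 5 : (λλ. (B 0) 1) F2 → λ. (B 0) F3
  have s5 : Step (app (lam (lam (app (app B (var 0)) (var 1)))) F2)
      (lam (app (app B (var 0)) F3)) := by
    have h := Step.beta (lam (app (app B (var 0)) (var 1))) F2
    have e : subst 0 F2 (lam (app (app B (var 0)) (var 1)))
        = lam (app (app B (var 0)) F3) := by
      show lam (app (app (subst 1 (lift 0 F2) B) (subst 1 (lift 0 F2) (var 0)))
        (subst 1 (lift 0 F2) (var 1))) = _
      rw [subst_B, hlF2]
      rfl
    rw [e] at h
    exact h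
  -- step 6 : (λ. (B 0) F3) (C A') → (B (C A')) F2
  have s6 : Step (app (lam (app (app B (var 0)) F3)) (app C A'))
      (app (app B (app C A')) F2) := by
    have h := Step.beta (app (app B (var 0)) F3) (app C A')
    have e : subst 0 (app C A') (app (app B (var 0)) F3)
        = app (app B (app C A')) F2 := by
      have h1 : subst 0 (app C A') F3 = F2 := by
        rw [hF3, hF2]
        exact subst_liftN 0 n _ _ (Nat.zero_le n)
      show app (app (subst 0 (app C A') B) (subst 0 (app C A') (var 0)))
        (subst 0 (app C A') F3) = _
      rw [subst_B, h1]
      rfl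
    rw [e] at h
    exact h
  -- step 7 : C A' → X
  have s7 : Step (app C A') X := by
    have h := Step.beta (lam (lam (app (app (var 2) (var 0)) (var 1)))) A'
    have e : subst 0 A' (lam (lam (app (app (var 2) (var 0)) (var 1)))) = X := by
      rw [hX, liftN_two]
      rfl
    rw [e] at h
    exact h
  -- step 8 : B X → λλ. (X↑2) (1 0)
  have s8 : Step (app B X) (lam (lam (app (liftN 2 X) (app (var 1) (var 0))))) := by
    have h := Step.beta (lam (lam (app (var 2) (app (var 1) (var 0))))) X
    have e : subst 0 X (lam (lam (app (var 2) (app (var 1) (var 0)))))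
        = lam (lam (app (liftN 2 X) (app (var 1) (var 0)))) := by
      rw [liftN_two]; rfl
    rw [e] at h
    exact h
  -- step 9 : (λλ. (X↑2) (1 0)) F2 → λ. (X↑1) (F3 0)
  have s9 : Step (app (lam (lam (app (liftN 2 X) (app (var 1) (var 0))))) F2)
      (lam (app (liftN 1 X) (app F3 (var 0)))) := by
    have h := Step.beta (lam (app (liftN 2 X) (app (var 1) (var 0)))) F2
    have e : subst 0 F2 (lam (app (liftN 2 X) (app (var 1) (var 0))))
        = lam (app (liftN 1 X) (app F3 (var 0))) := by
      have h1 : subst 1 (lift 0 F2) (liftN 2 X) = liftN 1 X :=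
        subst_liftN 1 1 _ _ le_rfl
      show lam (app (subst 1 (lift 0 F2) (liftN 2 X))
        (app (subst 1 (lift 0 F2) (var 1)) (subst 1 (lift 0 F2) (var 0)))) = _
      rw [h1, hlF2]
      rfl
    rw [e] at h
    exact h
  -- step 10 : (X↑1) (F3 0) → λ. ((A'↑2) 0) (F4 1)
  have s10 : Step (app (liftN 1 X) (app F3 (var 0)))
      (lam (app (app (liftN 2 A') (var 0)) (app F4 (var 1)))) := by
    have hX1 : liftN 1 X = lam (lam (app (app (liftN 3 A') (var 0)) (var 1))) := by
      rw [liftN_one, hX]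
      show lam (lam (app (app (lift 2 (liftN 2 A')) (lift 2 (var 0))) (lift 2 (var 1)))) = _
      rw [lift_liftN 2 2 _ le_rfl]
      rfl
    rw [hX1]
    have h := Step.beta (lam (app (app (liftN 3 A') (var 0)) (var 1))) (app F3 (var 0))
    have e : subst 0 (app F3 (var 0)) (lam (app (app (liftN 3 A') (var 0)) (var 1)))
        = lam (app (app (liftN 2 A') (var 0)) (app F4 (var 1))) := by
      have h1 : subst 1 (lift 0 (app F3 (var 0))) (liftN 3 A') = liftN 2 A' :=
        subst_liftN 1 2 _ _ (by omega)
      have h2 : lift 0 (app F3 (var 0)) = app F4 (var 1) := by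
        show app (lift 0 F3) (lift 0 (var 0)) = _
        rw [hlF3]
        rfl
      show lam (app (app (subst 1 (lift 0 (app F3 (var 0))) (liftN 3 A'))
        (subst 1 (lift 0 (app F3 (var 0))) (var 0)))
        (subst 1 (lift 0 (app F3 (var 0))) (var 1))) = _
      rw [h1, h2]
      rfl
    rw [e] at h
    exact h
  -- step 11 : (A'↑2) 0 → spineBody F4 (map (+1) (descList n))
  have s11 : Step (app (liftN 2 A') (var 0))
      (spineBody F4 ((descList n).map (· + 1))) := by
    have hA2 : liftN 2 A'
        = lam (spineBody (liftN (n + 3) F) (((descList n).map (· + 1)).map (· + 1))) := by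
      rw [hA', liftN_two]
      show lam (lift 1 (lift 1 (spineBody F3 (descList n)))) = _
      rw [hF3, lift_one_spine F (n + 1) _ (fun e he => (mem_descList he).1) (by omega)]
      rw [lift_one_spine F (n + 2) _
        (by
          intro e he
          simp only [List.mem_map] at he
          obtain ⟨e0, _, rfl⟩ := he
          omega) (by omega)]
    rw [hA2]
    have h := Step.beta
      (spineBody (liftN (n + 3) F) (((descList n).map (· + 1)).map (· + 1))) (var 0)
    have e : subst 0 (var 0)
        (spineBody (liftN (n + 3) F) (((descList n).map (· + 1)).map (· + 1)))
        = spineBody F4 ((descList n).map (· + 1)) := by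
      rw [subst_spineBody 0 0 _ _ (Or.inr rfl)]
      rw [subst_liftN 0 (n + 2) _ _ (Nat.zero_le _), ← hF4]
      congr 1
      rw [List.map_map, List.map_map]
      apply List.map_congr_left
      intro e he
      have := mem_descList he
      show (if e + 1 + 1 = 0 then 0 else if 0 < e + 1 + 1 then e + 1 + 1 - 1 else e + 1 + 1)
        = e + 1
      rw [if_neg (by omega), if_pos (by omega)]
      omega
    rw [e] at h
    exact h
  -- assemble
  have final_eq : lam (lam (app (spineBody F4 ((descList n).map (· + 1))) (app F4 (var 1))))
      = lam (lam (spineBody F4 (descList (n + 1)))) := by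
    rw [descList_succ, spineBody_append]
  rw [← final_eq]
  refine Relation.ReflTransGen.trans (red_appL _ (red_appL _ (red_step s1))) ?_
  refine Relation.ReflTransGen.trans (red_appL _ (red_step s2)) ?_
  refine Relation.ReflTransGen.trans (red_step s3) ?_
  refine Relation.ReflTransGen.trans (red_appR _ (red_appR _ (red_A F n))) ?_
  refine Relation.ReflTransGen.trans
    (red_appL _ ((red_appL _ (red_step s4)).trans (red_step s5))) ?_
  refine Relation.ReflTransGen.trans (red_step s6) ?_
  refine Relation.ReflTransGen.trans (red_appL _ (red_appR _ (red_step s7))) ?_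
  refine Relation.ReflTransGen.trans (red_appL _ (red_step s8)) ?_
  refine Relation.ReflTransGen.trans (red_step s9) ?_
  refine Relation.ReflTransGen.trans (red_lam (red_step s10)) ?_
  exact red_lam (red_lam (red_appL _ (red_step s11)))

end Main

section Final

lemma main_red (n : ℕ) (F : Tm) :
    Reduces (app (app (Bn n) (app (app B (app (app C B) F)) C)) (Q F n)) (Q F (n + 1)) := by
  set P := app (app B (app (app C B) F)) C with hP
  have sI : Step (app (Bn n) P)
      (lam (lamN n (app (liftN (n + 1) P) (appVars (var n) 0 n)))) := by
    have h := Step.beta (lamN (n + 1) (app (var (n + 1)) (appVars (var n) 0 n))) P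
    have e : subst 0 P (lamN (n + 1) (app (var (n + 1)) (appVars (var n) 0 n)))
        = lam (lamN n (app (liftN (n + 1) P) (appVars (var n) 0 n))) := by
      rw [subst_lamN]
      have h0 : 0 + (n + 1) = n + 1 := by omega
      rw [h0]
      show lamN (n + 1)
        (subst (n + 1) (liftN (n + 1) P) (app (var (n + 1)) (appVars (var n) 0 n)))
        = lamN (n + 1) (app (liftN (n + 1) P) (appVars (var n) 0 n))
      congr 1
      show app (subst (n + 1) (liftN (n + 1) P) (var (n + 1)))
        (subst (n + 1) (liftN (n + 1) P) (appVars (var n) 0 n)) = _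
      rw [subst_appVars n _ 0 (n + 1) _ (by omega)]
      congr 1
      · simp only [subst]
        simp
      · simp only [subst]
        rw [if_neg (by omega), if_neg (by omega)]
    rw [e] at h
    exact h
  have sII : Step (app (lam (lamN n (app (liftN (n + 1) P) (appVars (var n) 0 n)))) (Q F n))
      (lamN n (app (liftN n P) (appVars (liftN n (Q F n)) 0 n))) := by
    have h := Step.beta (lamN n (app (liftN (n + 1) P) (appVars (var n) 0 n))) (Q F n)
    have e : subst 0 (Q F n) (lamN n (app (liftN (n + 1) P) (appVars (var n) 0 n)))
        = lamN n (app (liftN n P) (appVars (liftN n (Q F n)) 0 n)) := by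
      rw [subst_lamN]
      have h0 : 0 + n = n := by omega
      rw [h0]
      congr 1
      show app (subst n (liftN n (Q F n)) (liftN (n + 1) P))
        (subst n (liftN n (Q F n)) (appVars (var n) 0 n)) = _
      rw [subst_liftN n n _ _ le_rfl, subst_appVars n _ 0 n _ (by omega)]
      congr 2
      simp only [subst]
      simp
    rw [e] at h
    exact h
  have hP2 : liftN n P = app (app B (app (app C B) (liftN n F))) C := by
    rw [hP]
    simp only [liftN_app, liftN_B, liftN_C]
  have hQ : Q F (n + 1)
      = lamN n (lam (lam (spineBody (liftN (n + 2) F) (descList (n + 1))))) := by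
    rw [Q, qBody_eq, lamN_lam, lamN_lam]
  refine Relation.ReflTransGen.trans (red_appL _ (red_step sI)) ?_
  refine Relation.ReflTransGen.trans (red_step sII) ?_
  rw [hQ]
  have h := inner_red F n
  rw [← hP2] at h
  exact red_lamN n h

end Final


/-- Q_{n+1}^F =βη (B_n (B (C B F) C) Q_n^F); moreover Q_0^F = I. -/
theorem mapKernel_recurrence (n : ℕ) (F : Tm) :
    BetaEta (Q F (n + 1))
      (app (app (Bn n) (app (app B (app (app C B) F)) C)) (Q F n)) ∧
    Q F 0 = I := by
  constructor
  · exact Relation.EqvGen.symm _ _ (reduces_betaEta (main_red n F))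
  · rfl

end Tm
end LC
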